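/- For every prime p ≥ 5, ss_p^{(3)}(X) = Σ_{n=0}^{(p−1+2δ)/3} C(2n,n)·C(3n,n)·X^{(p−1+2δ)/3 − n} as polynomials in 𝔽_p[X] (the binomial coefficients being reduced mod p). -/
import Mathlib


open Polynomial

noncomputable section

/-- The class number h(√-d) of the imaginary quadratic field ℚ(√-d),
realized as the subfield of ℂ generated by i·√d. -/
def classNumberSqrtNeg (d : ℕ) : ℕ :=
  haveI : FiniteDimensional ℚ (IntermediateField.adjoin ℚ {(Complex.I * Real.sqrt d : ℂ)}) :=
    IntermediateField.adjoin.finiteDimensional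
      ⟨X ^ 2 + C (d : ℚ), monic_X_pow_add_C _ (by norm_num), by
        have h : (Complex.I * (Real.sqrt d : ℂ)) ^ 2 = -(d : ℂ) := by
          rw [mul_pow, Complex.I_sq, ← Complex.ofReal_pow, Real.sq_sqrt (Nat.cast_nonneg d)]
          simp
        simp [h]⟩
  haveI : NumberField (IntermediateField.adjoin ℚ {(Complex.I * Real.sqrt d : ℂ)}) := ⟨⟩
  NumberField.classNumber (IntermediateField.adjoin ℚ {(Complex.I * Real.sqrt d : ℂ)})

variable (p : ℕ) [Fact p.Prime]

/-- ε = (1 - (-1|p))/2 -/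
def eps : ℕ := ((1 - legendreSym p (-1)) / 2).toNat
/-- δ = (1 - (-3|p))/2 -/
def del : ℕ := ((1 - legendreSym p (-3)) / 2).toNat
/-- ν = (1 - (-2|p))/2 -/
def nu : ℕ := ((1 - legendreSym p (-2)) / 2).toNat

/-- The Pochhammer symbol (x)_n = x(x+1)⋯(x+n-1) in 𝔽_p. -/
def poch (x : ZMod p) (n : ℕ) : ZMod p := (ascPochhammer (ZMod p) n).eval x

/-- The level-3 supersingular polynomial ss_p^{(3)}(X) ∈ 𝔽_p[X]:
Σ_{n=0}^{m} ((-m)_n (2/3-δ/3)_n / (n!)²) 27^n X^{m+δ-n}, with m = ⌊p/3⌋. -/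
def ss3Poly : (ZMod p)[X] :=
  ∑ n ∈ Finset.range (p / 3 + 1),
    C (poch p (-(p / 3 : ℕ) : ZMod p) n *
       poch p ((2 : ZMod p) / 3 - (del p : ZMod p) / 3) n /
       ((n.factorial : ZMod p)) ^ 2 * 27 ^ n) *
    X ^ (p / 3 + del p - n)

/-- L^{(3)}(p): the number of distinct roots of ss_p^{(3)}(X) in 𝔽_p. -/
def L3 : ℕ := (ss3Poly p).roots.toFinset.card

lemma my_leg3 (hp5 : 5 ≤ p) : legendreSym p (-3) = legendreSym 3 p := by
  have hpp : p.Prime := Fact.out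
  have hp2 : p ≠ 2 := by omega
  have hp3 : p ≠ 3 := by omega
  have hodd : p % 2 = 1 := Nat.odd_iff.mp (hpp.odd_of_ne_two hp2)
  have hqr := legendreSym.quadratic_reciprocity (p := p) (q := 3) hp2 (by norm_num) hp3
  have hm1 : legendreSym p (-1) = (-1) ^ (p / 2) := by
    rw [legendreSym.at_neg_one hp2, ZMod.χ₄_eq_neg_one_pow hodd]
  have hmul : legendreSym p (-3) = legendreSym p (-1) * legendreSym p 3 := by
    rw [← legendreSym.mul]; norm_num
  have hnd : ¬ (3 ∣ p) := fun h => hp3 ((Nat.prime_dvd_prime_iff_eq (by norm_num) hpp).mp h).symm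
  have hsq : legendreSym 3 (p : ℤ) * legendreSym 3 (p : ℤ) = 1 := by
    have hne : (((p : ℤ) : ZMod 3)) ≠ 0 := fun h =>
      hnd ((ZMod.natCast_eq_zero_iff p 3).mp (by exact_mod_cast h))
    have := legendreSym.sq_one 3 (a := (p : ℤ)) hne
    nlinarith [this]
  have hpow : ((-1 : ℤ) ^ (p / 2)) * ((-1 : ℤ) ^ (p / 2)) = 1 := by
    rw [← pow_add, ← two_mul, pow_mul]; norm_num
  simp only [Nat.cast_ofNat, show (3 : ℕ) / 2 = 1 from rfl, mul_one] at hqr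
  calc legendreSym p (-3) = (-1) ^ (p / 2) * legendreSym p 3 := by rw [hmul, hm1]
    _ = (legendreSym 3 p * legendreSym 3 p) * ((-1) ^ (p / 2) * legendreSym p 3) := by
        rw [hsq, one_mul]
    _ = legendreSym 3 p * ((legendreSym 3 p * legendreSym p 3) * (-1) ^ (p / 2)) := by ring
    _ = legendreSym 3 p * ((-1) ^ (p / 2) * (-1) ^ (p / 2)) := by rw [hqr]
    _ = legendreSym 3 p := by rw [hpow, mul_one]

lemma my_del_one (hp5 : 5 ≤ p) (h : p % 3 = 1) : del p = 0 := by
  have : legendreSym p (-3) = 1 := by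
    rw [my_leg3 p hp5, legendreSym.mod 3 p]
    have : ((p : ℤ) % ((3 : ℕ) : ℤ)) = 1 := by push_cast; omega
    rw [this]; decide
  simp [del, this]

lemma my_del_two (hp5 : 5 ≤ p) (h : p % 3 = 2) : del p = 1 := by
  have : legendreSym p (-3) = -1 := by
    rw [my_leg3 p hp5, legendreSym.mod 3 p]
    have : ((p : ℤ) % ((3 : ℕ) : ℤ)) = 2 := by push_cast; omega
    rw [this]; decide
  simp [del, this]

lemma my_key (hp5 : 5 ≤ p) (n : ℕ) :
    (((3 * n).factorial : ℕ) : ZMod p) =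
      27 ^ n * (n.factorial : ZMod p) * poch p (1 / 3) n * poch p (2 / 3) n := by
  have hpp : p.Prime := Fact.out
  have h3 : (3 : ZMod p) ≠ 0 := by
    have : ¬ (p ∣ 3) := fun h => by have := Nat.le_of_dvd (by norm_num) h; omega
    exact_mod_cast fun h => this ((ZMod.natCast_eq_zero_iff 3 p).mp (by exact_mod_cast h))
  induction n with
  | zero => simp [poch]
  | succ k ih =>
    rw [show 3 * (k + 1) = 3 * k + 1 + 1 + 1 by ring, Nat.factorial_succ, Nat.factorial_succ,
      Nat.factorial_succ, Nat.factorial_succ]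
    push_cast
    rw [ih]
    simp only [poch, ascPochhammer_succ_eval]
    field_simp
    ring

lemma my_coeff (hp5 : 5 ≤ p) (n : ℕ) (hn : 3 * n < p) :
    poch p (1 / 3) n * poch p (2 / 3) n / ((n.factorial : ZMod p)) ^ 2 * 27 ^ n =
      (((2 * n).choose n : ℕ) : ZMod p) * (((3 * n).choose n : ℕ) : ZMod p) := by
  have hpp : p.Prime := Fact.out
  have hfac : ((n.factorial : ℕ) : ZMod p) ≠ 0 := by
    rw [Ne, ZMod.natCast_eq_zero_iff, hpp.dvd_factorial]
    omega
  have a : (2 * n).choose n * n.factorial * n.factorial = (2 * n).factorial := by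
    have := Nat.choose_mul_factorial_mul_factorial (show n ≤ 2 * n by omega)
    rwa [show 2 * n - n = n by omega] at this
  have b : (3 * n).choose n * n.factorial * (2 * n).factorial = (3 * n).factorial := by
    have := Nat.choose_mul_factorial_mul_factorial (show n ≤ 3 * n by omega)
    rwa [show 3 * n - n = 2 * n by omega] at this
  have hnat : (2 * n).choose n * (3 * n).choose n * (n.factorial) ^ 3 = (3 * n).factorial := by
    rw [← b, ← a]; ring
  have hc : (((2 * n).choose n : ℕ) : ZMod p) * (((3 * n).choose n : ℕ) : ZMod p) *
      ((n.factorial : ℕ) : ZMod p) ^ 3 = (((3 * n).factorial : ℕ) : ZMod p) := by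
    exact_mod_cast congrArg (Nat.cast : ℕ → ZMod p) hnat
  have hkey := my_key p hp5 n
  rw [hkey] at hc
  field_simp
  apply mul_left_cancel₀ hfac
  linear_combination -hc

/-- For every prime p ≥ 5,
ss_p^{(3)}(X) = Σ_{n=0}^{(p−1+2δ)/3} C(2n,n)·C(3n,n)·X^{(p−1+2δ)/3 − n} in 𝔽_p[X]. -/
theorem ss3_explicit (hp : 5 ≤ p) :
    ss3Poly p =
      ∑ n ∈ Finset.range ((p - 1 + 2 * del p) / 3 + 1),
        C ((((2 * n).choose n : ℕ) : ZMod p) * (((3 * n).choose n : ℕ) : ZMod p)) *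
          X ^ ((p - 1 + 2 * del p) / 3 - n) := by
  have hpp : p.Prime := Fact.out
  have hnd : ¬ (3 ∣ p) := fun h => by
    have := (Nat.prime_dvd_prime_iff_eq (by norm_num) hpp).mp h; omega
  have hm3 : p % 3 ≠ 0 := fun h => hnd (Nat.dvd_of_mod_eq_zero h)
  have h3 : (3 : ZMod p) ≠ 0 := by
    have hnd3 : ¬ (p ∣ 3) := fun h => by have := Nat.le_of_dvd (by norm_num) h; omega
    exact_mod_cast fun h =>
      hnd3 ((ZMod.natCast_eq_zero_iff 3 p).mp (by exact_mod_cast h))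
  rcases (by omega : p % 3 = 1 ∨ p % 3 = 2) with h1 | h2
  · have hd := my_del_one p hp h1
    have hmeq : (p - 1 + 2 * del p) / 3 = p / 3 := by rw [hd]; omega
    rw [ss3Poly, hmeq, hd]
    apply Finset.sum_congr rfl
    intro n hn
    simp only [Finset.mem_range] at hn
    have hnp : 3 * n < p := by omega
    have h31 : (3 : ZMod p) * ((p / 3 : ℕ) : ZMod p) = -1 := by
      have e1 : ((3 * (p / 3) : ℕ) : ZMod p) = ((p - 1 : ℕ) : ZMod p) := by
        rw [show 3 * (p / 3) = p - 1 by omega]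
      have e2 : ((p - 1 : ℕ) : ZMod p) = -1 := by
        rw [Nat.cast_sub (by omega), ZMod.natCast_self]; ring
      rw [e2] at e1; push_cast at e1; exact e1
    have hneg : (-((p / 3 : ℕ) : ZMod p)) = 1 / 3 := by
      rw [eq_div_iff h3]; linear_combination -h31
    rw [hneg]
    simp only [Nat.cast_zero, zero_div, sub_zero, add_zero]
    rw [my_coeff p hp n hnp]
  · have hd := my_del_two p hp h2
    have hmeq : (p - 1 + 2 * del p) / 3 = p / 3 + 1 := by rw [hd]; omega
    rw [ss3Poly, hmeq, hd, Finset.sum_range_succ (n := p / 3 + 1)]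
    have hdvd : (((3 * (p / 3 + 1)).choose (p / 3 + 1) : ℕ) : ZMod p) = 0 := by
      rw [ZMod.natCast_eq_zero_iff, show 3 * (p / 3 + 1) = p + 1 by omega]
      exact Nat.Prime.dvd_choose hpp (by omega) (by omega) (by omega)
    rw [hdvd, mul_zero, map_zero, zero_mul, add_zero]
    apply Finset.sum_congr rfl
    intro n hn
    simp only [Finset.mem_range] at hn
    have hnp : 3 * n < p := by omega
    have h31 : (3 : ZMod p) * ((p / 3 : ℕ) : ZMod p) = -2 := by
      have e1 : ((3 * (p / 3) : ℕ) : ZMod p) = ((p - 2 : ℕ) : ZMod p) := by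
        rw [show 3 * (p / 3) = p - 2 by omega]
      have e2 : ((p - 2 : ℕ) : ZMod p) = -2 := by
        rw [Nat.cast_sub (by omega), ZMod.natCast_self]; ring
      rw [e2] at e1; push_cast at e1; exact e1
    have hneg : (-((p / 3 : ℕ) : ZMod p)) = 2 / 3 := by
      rw [eq_div_iff h3]; linear_combination -h31
    have hsub : (2 : ZMod p) / 3 - ((1 : ℕ) : ZMod p) / 3 = 1 / 3 := by
      push_cast; ring
    rw [hneg, hsub, mul_comm (poch p (2 / 3) n) (poch p (1 / 3) n),
      my_coeff p hp n hnp]
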